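/- arXiv:1712.00920 — 5 statements merged into one kernel-verified Lean document; each statement's English description precedes it below -/
import Mathlib

section
/- Let d ≥ 2, j ∈ {1,…,d}, and let φ : ℝ^d → ℝ be continuously differentiable with (D_j φ)(x) > 0 for all x ∈ ℝ^d and φ(x_j, x_{-j}) → +∞ as x_j → +∞ for every fixed x_{-j} ∈ ℝ^{d−1}. Let U_j := {y ∈ ℝ^{d−1} : φ(x_j, y) = 0 for some x_j ∈ ℝ}, assume U_j nonempty, and let ψ : U_j → ℝ be the unique function with φ(ψ(y), y) = 0 for all y ∈ U_j. Then for every point y* on the boundary of U_j and every sequence (y_n) ⊂ U_j with y_n → y*, one has ψ(y_n) → −∞. -/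
open MeasureTheory Filter Topology ENNReal

/-- The classical partial-derivative operator `D_i`. -/
noncomputable def pderiv {d : ℕ} (i : Fin d) (f : (Fin d → ℝ) → ℝ) : (Fin d → ℝ) → ℝ :=
  fun x => fderiv ℝ f x (Pi.single i 1)

/-- If `φ ∈ C¹(ℝ^d)` (`d = n + 1 ≥ 2`) has `D_j φ > 0` everywhere and
`φ(x_j, y) → +∞` as `x_j → +∞` for every fixed `y`, `U = U_j` is nonempty and
`ψ` is the implicit solution on `U`, then for every boundary point `ystar` of `U`
and every sequence `(y_m) ⊂ U` converging to `ystar` one has `ψ(y_m) → −∞`. -/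
theorem psi_tendsto_atBot_on_boundary {n : ℕ} (hn : 1 ≤ n) (j : Fin (n + 1))
    (φ : (Fin (n + 1) → ℝ) → ℝ) (hφ : ContDiff ℝ 1 φ)
    (hmono : ∀ x, 0 < pderiv j φ x)
    (hgrow : ∀ y : Fin n → ℝ, Filter.Tendsto (fun t => φ (j.insertNth t y)) atTop atTop)
    (U : Set (Fin n → ℝ)) (hU : U = {y : Fin n → ℝ | ∃ t : ℝ, φ (j.insertNth t y) = 0})
    (hUne : U.Nonempty)
    (ψ : (Fin n → ℝ) → ℝ) (hψ : ∀ y ∈ U, φ (j.insertNth (ψ y) y) = 0)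
    (ystar : Fin n → ℝ) (hystar : ystar ∈ frontier U)
    (ys : ℕ → Fin n → ℝ) (hys : ∀ m, ys m ∈ U)
    (hlim : Filter.Tendsto ys atTop (nhds ystar)) :
    Filter.Tendsto (fun m => ψ (ys m)) atTop atBot := by
  -- continuity in y for fixed t
  have hins : ∀ t : ℝ, Continuous (fun y : Fin n → ℝ => (j.insertNth t y : Fin (n + 1) → ℝ)) := by
    intro t
    have := @Continuous.finInsertNth (Fin n → ℝ) _ n (fun _ => ℝ) _ j
      (fun _ => t) (fun y => y) continuous_const continuous_id
    simpa using this
  have hconty : ∀ t : ℝ, Continuous (fun y : Fin n → ℝ => φ (j.insertNth t y)) := fun t =>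
    hφ.continuous.comp (hins t)
  -- insertNth as an affine map in t
  have hins2 : ∀ (y : Fin n → ℝ) (t : ℝ),
      (j.insertNth t y : Fin (n + 1) → ℝ) = (j.insertNth 0 y : Fin (n + 1) → ℝ) + t • (Pi.single j 1 : Fin (n + 1) → ℝ) := by
    intro y t
    funext i
    refine Fin.succAboveCases j ?_ ?_ i
    · simp
    · intro k
      simp [Pi.single_eq_of_ne (j.succAbove_ne k)]
  -- strict monotonicity in t
  have hsm : ∀ y : Fin n → ℝ, StrictMono (fun t => φ (j.insertNth t y)) := by
    intro y
    have hd : ∀ t : ℝ, HasDerivAt (fun t => φ (j.insertNth t y))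
        (pderiv j φ (j.insertNth t y)) t := by
      intro t
      have hc : HasDerivAt (fun t : ℝ => (j.insertNth t y : Fin (n + 1) → ℝ)) ((Pi.single j 1 : Fin (n + 1) → ℝ)) t := by
        have he : (fun t : ℝ => (j.insertNth t y : Fin (n + 1) → ℝ))
            = fun t => (j.insertNth 0 y : Fin (n + 1) → ℝ) + t • (Pi.single j 1 : Fin (n + 1) → ℝ) := funext (hins2 y)
        rw [he]
        simpa using ((hasDerivAt_id t).smul_const ((Pi.single j 1 : Fin (n + 1) → ℝ): _)).const_add
          (j.insertNth 0 y)
      exact ((hφ.differentiable one_ne_zero (j.insertNth t y)).hasFDerivAt).comp_hasDerivAt t hc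
    refine strictMono_of_deriv_pos fun t => ?_
    rw [(hd t).deriv]
    exact hmono _
  -- U is open
  have hUopen : IsOpen U := by
    rw [hU, isOpen_iff_mem_nhds]
    rintro y ⟨t0, ht0⟩
    have h1 : 0 < φ (j.insertNth (t0 + 1) y) := by
      simpa [ht0] using hsm y (lt_add_one t0)
    have h2 : φ (j.insertNth (t0 - 1) y) < 0 := by
      simpa [ht0] using hsm y (sub_one_lt t0)
    have hopen : IsOpen ({z : Fin n → ℝ | 0 < φ (j.insertNth (t0 + 1) z)}
        ∩ {z | φ (j.insertNth (t0 - 1) z) < 0}) :=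
      (isOpen_lt continuous_const (hconty _)).inter (isOpen_lt (hconty _) continuous_const)
    refine Filter.mem_of_superset (hopen.mem_nhds ⟨h1, h2⟩) ?_
    rintro z ⟨hz1, hz2⟩
    have hsub := intermediate_value_Icc (by linarith : t0 - 1 ≤ t0 + 1)
      ((hφ.continuous.comp (continuous_id.finInsertNth j continuous_const)).continuousOn :
        ContinuousOn (fun t => φ (j.insertNth t z)) (Set.Icc (t0 - 1) (t0 + 1)))
    obtain ⟨t, _, ht⟩ := hsub ⟨le_of_lt hz2, le_of_lt hz1⟩
    exact ⟨t, ht⟩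
  -- ystar is not in U
  have hnot : ystar ∉ U := (hUopen.frontier_eq ▸ hystar).2
  -- φ(t, ystar) > 0 for all t
  have hpos : ∀ t : ℝ, 0 < φ (j.insertNth t ystar) := by
    intro t
    rcases lt_trichotomy (φ (j.insertNth t ystar)) 0 with hneg | hzero | hpos
    · exfalso
      obtain ⟨T, hTt, hT0⟩ := ((eventually_ge_atTop t).and
        ((hgrow ystar).eventually_gt_atTop 0)).exists
      have hsub := intermediate_value_Icc hTt
        ((hφ.continuous.comp (continuous_id.finInsertNth j continuous_const)).continuousOn :
          ContinuousOn (fun s => φ (j.insertNth s ystar)) (Set.Icc t T))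
      obtain ⟨s, _, hs⟩ := hsub ⟨le_of_lt hneg, le_of_lt hT0⟩
      exact hnot (hU ▸ ⟨s, hs⟩)
    · exact absurd (hU ▸ ⟨t, hzero⟩ : ystar ∈ U) hnot
    · exact hpos
  -- main argument
  rw [tendsto_atBot]
  intro b
  have hb : 0 < φ (j.insertNth b ystar) := hpos b
  have hev : ∀ᶠ m in atTop, 0 < φ (j.insertNth b (ys m)) :=
    hlim.eventually ((isOpen_lt continuous_const (hconty b)).eventually_mem hb)
  filter_upwards [hev] with m hm
  by_contra hcon
  push_neg at hcon
  have h2 : φ (j.insertNth b (ys m)) < 0 := by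
    simpa [hψ (ys m) (hys m)] using hsm (ys m) hcon
  exact absurd hm (not_lt.mpr h2.le)
end

section
/- Let r ≥ 0, k ≥ 1, let U ⊆ ℝ^k be open, and let g : ℝ^k → ℝ satisfy: (i) g is r times continuously differentiable on U; (ii) g(y) = 0 for all y in the complement U^c; (iii) for every multi-index α with |α| ≤ r and every sequence (y_n) ⊂ U converging to a point y* ∈ U^c, (D^α g)(y_n) → 0. Then g is r times continuously differentiable on all of ℝ^k, and (D^α g)(y) = 0 for all y ∈ U^c and all multi-indices α with |α| ≤ r. -/
open MeasureTheory Filter Topology ENNReal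

/-- The classical mixed partial-derivative operator `D^α`. -/
noncomputable def mderiv {d : ℕ} (α : Fin d → ℕ) (f : (Fin d → ℝ) → ℝ) : (Fin d → ℝ) → ℝ :=
  (List.finRange d).foldr (fun i g => (pderiv i)^[α i] g) f

variable {k : ℕ}

noncomputable def mderivList (l : List (Fin k)) (f : (Fin k → ℝ) → ℝ) : (Fin k → ℝ) → ℝ :=
  l.foldr (fun i h => pderiv i h) f

def toList (α : Fin k → ℕ) : List (Fin k) :=
  (List.finRange k).flatMap fun j => List.replicate (α j) j

lemma mderivList_replicate (n : ℕ) (i : Fin k) (f : (Fin k → ℝ) → ℝ) :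
    mderivList (List.replicate n i) f = (pderiv i)^[n] f := by
  induction n with
  | zero => rfl
  | succ n ih =>
      rw [List.replicate_succ]
      show pderiv i (mderivList (List.replicate n i) f) = _
      rw [ih]
      exact (Function.iterate_succ_apply' (pderiv i) n f).symm

lemma mderivList_append (l₁ l₂ : List (Fin k)) (f : (Fin k → ℝ) → ℝ) :
    mderivList (l₁ ++ l₂) f = mderivList l₁ (mderivList l₂ f) := by
  simp [mderivList, List.foldr_append]

lemma mderiv_eq_mderivList (α : Fin k → ℕ) (f : (Fin k → ℝ) → ℝ) :
    mderiv α f = mderivList (toList α) f := by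
  show _ = mderivList ((List.finRange k).flatMap fun j => List.replicate (α j) j) f
  unfold mderiv
  induction List.finRange k with
  | nil => rfl
  | cons a l ih => simp [List.flatMap_cons, mderivList_append, ih, mderivList_replicate]

lemma toList_length (α : Fin k → ℕ) : (toList α).length = ∑ i, α i := by
  simp [toList, List.length_flatMap, Fin.sum_univ_def, Function.comp_def]

lemma count_toList (α : Fin k → ℕ) (c : Fin k) : (toList α).count c = α c := by
  have h : ∀ (l : List (Fin k)), l.Nodup →
      ((l.flatMap fun j => List.replicate (α j) j).count c
        = if c ∈ l then α c else 0) := by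
    intro l hl
    induction l with
    | nil => simp
    | cons a l ih =>
        rw [List.flatMap_cons, List.count_append, List.count_replicate,
          ih hl.of_cons]
        rcases eq_or_ne c a with rfl | hca
        · simp [(List.nodup_cons.1 hl).1]
        · have : ¬ (a = c) := fun h => hca h.symm
          simp [hca, this, List.mem_cons]
  rw [toList, h _ (List.nodup_finRange k)]
  simp [List.mem_finRange]

lemma toList_perm (α : Fin k → ℕ) (i : Fin k) :
    (toList (α + Pi.single i 1)).Perm (toList α ++ [i]) := by
  rw [List.perm_iff_count]
  intro c
  rw [List.count_append, count_toList, count_toList, Pi.add_apply]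
  rcases eq_or_ne c i with rfl | hci
  · simp
  · simp [Pi.single_apply, hci, hci.symm, List.count_cons, List.count_nil]

variable {k : ℕ} {U : Set (Fin k → ℝ)}

lemma contDiffOn_pderiv (hU : IsOpen U) {f : (Fin k → ℝ) → ℝ} {n : ℕ}
    (hf : ContDiffOn ℝ ((n + 1 : ℕ)) f U) (i : Fin k) :
    ContDiffOn ℝ (n : ℕ) (pderiv i f) U := by
  have h1 : ContDiffOn ℝ (n : ℕ) (fderiv ℝ f) U := by
    apply hf.fderiv_of_isOpen hU
    push_cast; exact le_refl _
  exact h1.clm_apply contDiffOn_const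

lemma pderiv_eqOn (hU : IsOpen U) {f₁ f₂ : (Fin k → ℝ) → ℝ}
    (h : Set.EqOn f₁ f₂ U) (i : Fin k) :
    Set.EqOn (pderiv i f₁) (pderiv i f₂) U := by
  intro x hx
  unfold pderiv
  rw [Filter.EventuallyEq.fderiv_eq (h.eventuallyEq_of_mem (hU.mem_nhds hx))]

lemma contDiffOn_mderivList (hU : IsOpen U) {n : ℕ} :
    ∀ (l : List (Fin k)) {f : (Fin k → ℝ) → ℝ}, ContDiffOn ℝ (n : ℕ) f U → l.length ≤ n →
    ContDiffOn ℝ ((n - l.length : ℕ)) (mderivList l f) U := by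
  intro l
  induction l with
  | nil => intro f hf _; simpa [mderivList] using hf
  | cons i l ih =>
      intro f hf hl
      have hlen : l.length ≤ n := by simp at hl; omega
      have h2 := ih hf hlen
      have e : n - l.length = (n - (i :: l).length) + 1 := by simp at hl ⊢; omega
      rw [e] at h2
      exact contDiffOn_pderiv hU h2 i

lemma pderiv_swap (hU : IsOpen U) {f : (Fin k → ℝ) → ℝ}
    (hf : ContDiffOn ℝ 2 f U) (i j : Fin k) :
    Set.EqOn (pderiv i (pderiv j f)) (pderiv j (pderiv i f)) U := by
  intro x hx
  have hx2 : ContDiffAt ℝ 2 f x := hf.contDiffAt (hU.mem_nhds hx)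
  have hsymm : IsSymmSndFDerivAt ℝ f x := hx2.isSymmSndFDerivAt (by simp)
  have hdiff : DifferentiableAt ℝ (fderiv ℝ f) x :=
    (hx2.fderiv_right (m := 1) (by norm_num)).differentiableAt one_ne_zero
  have key : ∀ a b : Fin k, pderiv a (pderiv b f) x
      = fderiv ℝ (fderiv ℝ f) x (Pi.single a 1) (Pi.single b 1) := by
    intro a b
    show fderiv ℝ (fun y => fderiv ℝ f y (Pi.single b 1)) x (Pi.single a 1) = _
    rw [fderiv_clm_apply hdiff (differentiableAt_const _)]
    simp
  rw [key, key, hsymm]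

lemma mderivList_perm (hU : IsOpen U) {n : ℕ} :
    ∀ {l₁ l₂ : List (Fin k)}, l₁.Perm l₂ →
      ∀ {f : (Fin k → ℝ) → ℝ}, ContDiffOn ℝ (n : ℕ) f U → l₁.length ≤ n →
      Set.EqOn (mderivList l₁ f) (mderivList l₂ f) U := by
  intro l₁ l₂ hp
  induction hp with
  | nil => intro f _ _; exact fun x _ => rfl
  | @cons x l₁ l₂ p ih =>
      intro f hf hl
      have hlen : l₁.length ≤ n := by simp at hl; omega
      exact pderiv_eqOn hU (ih hf hlen) x
  | @swap i j l =>
      intro f hf hl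
      have hlen : l.length ≤ n := by simp at hl; omega
      have h2 := contDiffOn_mderivList hU l hf hlen
      have h2' : ContDiffOn ℝ 2 (mderivList l f) U := by
        apply h2.of_le
        have : (2 : ℕ) ≤ n - l.length := by simp at hl; omega
        exact_mod_cast Nat.cast_le.mpr this
      exact pderiv_swap hU h2' j i
  | @trans l₁ l₂ l₃ p₁ p₂ ih₁ ih₂ =>
      intro f hf hl
      exact (ih₁ hf hl).trans (ih₂ hf (p₁.length_eq ▸ hl))

lemma tendsto_nhdsWithin_of_seq {U : Set (Fin k → ℝ)} {h : (Fin k → ℝ) → ℝ}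
    {ystar : Fin k → ℝ} (hyU : ystar ∉ U)
    (hseq : ∀ (ys : ℕ → Fin k → ℝ), (∀ m, ys m ∈ U) → Tendsto ys atTop (𝓝 ystar) →
      Tendsto (fun m => h (ys m)) atTop (𝓝 0)) :
    Tendsto h (𝓝[U] ystar) (𝓝 0) := by
  rw [tendsto_iff_seq_tendsto]
  intro u hu
  have h1 : ∀ᶠ m in atTop, u m ∈ U := hu.eventually eventually_mem_nhdsWithin
  obtain ⟨N, hN⟩ := eventually_atTop.1 h1
  have htu : Tendsto (fun m => u (m + N)) atTop (𝓝 ystar) :=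
    (hu.mono_right nhdsWithin_le_nhds).comp (tendsto_add_atTop_nat N)
  have := hseq (fun m => u (m + N)) (fun m => hN _ (Nat.le_add_left _ _)) htu
  exact (tendsto_add_atTop_iff_nat N).1 this

lemma tendsto_nhds_of_seq {U : Set (Fin k → ℝ)} {h : (Fin k → ℝ) → ℝ}
    (h0 : ∀ y ∉ U, h y = 0) {ystar : Fin k → ℝ} (hyU : ystar ∉ U)
    (hseq : ∀ (ys : ℕ → Fin k → ℝ), (∀ m, ys m ∈ U) → Tendsto ys atTop (𝓝 ystar) →
      Tendsto (fun m => h (ys m)) atTop (𝓝 0)) :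
    Tendsto h (𝓝 ystar) (𝓝 0) := by
  rw [← nhdsWithin_univ, ← Set.union_compl_self U, nhdsWithin_union, tendsto_sup]
  refine ⟨tendsto_nhdsWithin_of_seq hyU hseq, ?_⟩
  have : ∀ᶠ y in 𝓝[Uᶜ] ystar, h y = 0 := by
    filter_upwards [eventually_mem_nhdsWithin] with y hy using h0 y hy
  exact Tendsto.congr' (by filter_upwards [this] with y hy using hy.symm) tendsto_const_nhds

lemma hasFDerivAt_zero_of_boundary {U : Set (Fin k → ℝ)} (hU : IsOpen U)
    {f : (Fin k → ℝ) → ℝ}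
    (hdf : DifferentiableOn ℝ f U)
    (h0 : ∀ y ∉ U, f y = 0)
    (hcont : ∀ z ∉ U, Tendsto f (𝓝 z) (𝓝 0))
    (hgrad : ∀ ystar ∉ U, Tendsto (fun z => ‖fderiv ℝ f z‖) (𝓝[U] ystar) (𝓝 0))
    {ystar : Fin k → ℝ} (hy : ystar ∉ U) : HasFDerivAt f (0 : (Fin k → ℝ) →L[ℝ] ℝ) ystar := by
  rw [hasFDerivAt_iff_isLittleO, Asymptotics.isLittleO_iff]
  intro c hc
  obtain ⟨δ, hδpos, hδ⟩ := (Metric.tendsto_nhdsWithin_nhds.1 (hgrad ystar hy)) c hc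
  have hball : Metric.ball ystar δ ∈ 𝓝 ystar := Metric.ball_mem_nhds _ hδpos
  filter_upwards [hball] with y hyball
  simp only [h0 ystar hy, sub_zero, ContinuousLinearMap.zero_apply]
  by_cases hyU : y ∈ U
  · -- main case
    set φ : ℝ → (Fin k → ℝ) := fun t => ystar + t • (y - ystar) with hφ
    set S : Set ℝ := Set.Icc (0:ℝ) 1 ∩ φ ⁻¹' Uᶜ with hS
    have hφcont : Continuous φ := continuous_const.add (continuous_id.smul continuous_const)
    have hScomp : IsCompact S :=
      isCompact_Icc.inter_right (hU.isClosed_compl.preimage hφcont)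
    have hS0 : (0:ℝ) ∈ S := by
      constructor
      · exact ⟨le_refl _, zero_le_one⟩
      · show φ 0 ∈ Uᶜ
        simp [hφ, hy]
    set t' := sSup S with ht'
    have htS : t' ∈ S := hScomp.sSup_mem ⟨0, hS0⟩
    have hzU : φ t' ∉ U := htS.2
    have ht0 : 0 ≤ t' := htS.1.1
    have hφ1 : φ 1 = y := by simp [hφ]
    have ht1 : t' < 1 := by
      rcases lt_or_eq_of_le htS.1.2 with h | h
      · exact h
      · exfalso; apply hzU; rw [h, hφ1]; exact hyU
    have hyd : ‖y - ystar‖ < δ := by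
      rw [← dist_eq_norm]; exact Metric.mem_ball.1 hyball
    -- MVT on segments [φ t, y] for t ∈ (t', 1]
    have hseg : ∀ t ∈ Set.Ioc t' 1, ‖f y - f (φ t)‖ ≤ c * ‖y - φ t‖ := by
      intro t ht
      have hsub : segment ℝ (φ t) y ⊆ U ∩ Metric.ball ystar δ := by
        intro w hw
        rw [segment_eq_image'] at hw
        obtain ⟨θ, ⟨hθ0, hθ1⟩, rfl⟩ := hw
        show φ t + θ • (y - φ t) ∈ U ∩ Metric.ball ystar δ
        have hyφ : y - φ t = (1 - t) • (y - ystar) := by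
          simp only [hφ]; module
        have hwval : φ t + θ • (y - φ t) = φ (t + θ * (1 - t)) := by
          rw [hyφ]; simp only [hφ]; module
        rw [hwval]
        set s := t + θ * (1 - t) with hs'
        have hst : t' < s := by nlinarith [ht.1, ht.2]
        have hs1 : s ≤ 1 := by nlinarith [ht.2]
        have hs0 : 0 ≤ s := by nlinarith [ht.1, ht.2, ht0]
        constructor
        · by_contra hsU
          have : s ∈ S := ⟨⟨hs0, hs1⟩, hsU⟩
          exact absurd (le_csSup hScomp.bddAbove this) (not_le.2 hst)
        · rw [Metric.mem_ball, dist_eq_norm]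
          have : φ s - ystar = s • (y - ystar) := by simp only [hφ]; module
          rw [this, norm_smul, Real.norm_eq_abs, abs_of_nonneg hs0]
          calc s * ‖y - ystar‖ ≤ 1 * ‖y - ystar‖ := by
                apply mul_le_mul_of_nonneg_right hs1 (norm_nonneg _)
            _ < δ := by rw [one_mul]; exact hyd
      have hmvt := (convex_segment (φ t) y).norm_image_sub_le_of_norm_hasFDerivWithin_le
        (f := f) (f' := fun x => fderiv ℝ f x) (s := segment ℝ (φ t) y) (C := c)
        (fun x hx => ((hdf.differentiableAt (hU.mem_nhds (hsub hx).1)).hasFDerivAt).hasFDerivWithinAt)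
        (fun x hx => le_of_lt (by
          have := hδ (hsub hx).1 (Metric.mem_ball.1 (hsub hx).2)
          simpa [dist_eq_norm] using this))
        (left_mem_segment ℝ _ _) (right_mem_segment ℝ _ _)
      exact hmvt
    -- pass to the limit t → t'⁺
    have hφt : Tendsto φ (𝓝[>] t') (𝓝 (φ t')) :=
      (hφcont.tendsto t').mono_left nhdsWithin_le_nhds
    have hfφ : Tendsto (fun t => f (φ t)) (𝓝[>] t') (𝓝 0) :=
      (hcont (φ t') hzU).comp hφt
    have h1 : Tendsto (fun t => ‖f y - f (φ t)‖) (𝓝[>] t') (𝓝 ‖f y - 0‖) :=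
      (tendsto_const_nhds.sub hfφ).norm
    have h2 : Tendsto (fun t => c * ‖y - φ t‖) (𝓝[>] t') (𝓝 (c * ‖y - φ t'‖)) :=
      ((tendsto_const_nhds.sub hφt).norm).const_mul c
    have hev : ∀ᶠ t in 𝓝[>] t', ‖f y - f (φ t)‖ ≤ c * ‖y - φ t‖ := by
      filter_upwards [Ioc_mem_nhdsGT_of_mem ⟨le_refl t', ht1⟩] with t ht using hseg t ht
    have hfinal : ‖f y - 0‖ ≤ c * ‖y - φ t'‖ := le_of_tendsto_of_tendsto h1 h2 hev
    rw [sub_zero] at hfinal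
    refine hfinal.trans ?_
    apply mul_le_mul_of_nonneg_left _ (le_of_lt hc)
    have : y - φ t' = (1 - t') • (y - ystar) := by simp only [hφ]; module
    rw [this, norm_smul, Real.norm_eq_abs, abs_of_nonneg (by linarith)]
    nlinarith [norm_nonneg (y - ystar)]
  · rw [h0 y hyU]
    simp only [norm_zero]
    positivity

lemma mderiv_zero (f : (Fin k → ℝ) → ℝ) : mderiv (fun _ => 0) f = f := by
  rw [mderiv_eq_mderivList]
  have : toList (fun _ : Fin k => 0) = [] := by simp [toList]
  rw [this]; rfl

lemma toList_single (i : Fin k) : toList (Pi.single i 1 : Fin k → ℕ) = [i] := by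
  have h : ∀ (l : List (Fin k)), l.Nodup →
      (l.flatMap fun j => List.replicate ((Pi.single i 1 : Fin k → ℕ) j) j)
        = if i ∈ l then [i] else [] := by
    intro l hl
    induction l with
    | nil => simp
    | cons a l ih =>
        rw [List.flatMap_cons, ih hl.of_cons]
        rcases eq_or_ne a i with rfl | hai
        · simp [(List.nodup_cons.1 hl).1, Pi.single_apply]
        · have : (Pi.single i 1 : Fin k → ℕ) a = 0 := Pi.single_eq_of_ne hai 1
          have h2 : ¬ (i = a) := fun h => hai h.symm
          simp [this, List.mem_cons, h2]
  rw [toList, h _ (List.nodup_finRange k)]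
  simp [List.mem_finRange]

lemma mderiv_single (i : Fin k) (f : (Fin k → ℝ) → ℝ) :
    mderiv (Pi.single i 1) f = pderiv i f := by
  rw [mderiv_eq_mderivList, toList_single]; rfl

lemma sum_single_one (i : Fin k) : (∑ j, (Pi.single i 1 : Fin k → ℕ) j) = 1 := by
  simp [Pi.single_apply]

lemma clm_apply_eq_sum (L : (Fin k → ℝ) →L[ℝ] ℝ) (v : Fin k → ℝ) :
    L v = ∑ i, L (Pi.single i 1) * v i := by
  have hv : v = ∑ i, (v i) • (Pi.single i (1:ℝ) : Fin k → ℝ) := by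
    ext j
    rw [Finset.sum_apply]
    simp [Pi.single_apply]
  conv_lhs => rw [hv]
  rw [map_sum]
  congr 1; ext i
  rw [_root_.map_smul]
  simp [mul_comm]

lemma clm_eq_sum_proj (L : (Fin k → ℝ) →L[ℝ] ℝ) :
    L = ∑ i, L (Pi.single i 1) • (ContinuousLinearMap.proj i : (Fin k → ℝ) →L[ℝ] ℝ) := by
  ext v
  rw [ContinuousLinearMap.sum_apply, clm_apply_eq_sum L v]
  simp [ContinuousLinearMap.proj_apply]

lemma opnorm_le_sum (L : (Fin k → ℝ) →L[ℝ] ℝ) : ‖L‖ ≤ ∑ i, ‖L (Pi.single i 1)‖ := by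
  apply ContinuousLinearMap.opNorm_le_bound
  · positivity
  · intro v
    rw [clm_apply_eq_sum L v]
    calc ‖∑ i, L (Pi.single i 1) * v i‖ ≤ ∑ i, ‖L (Pi.single i 1) * v i‖ :=
          norm_sum_le _ _
      _ ≤ ∑ i, ‖L (Pi.single i 1)‖ * ‖v‖ := by
          apply Finset.sum_le_sum
          intro i _
          rw [norm_mul]
          exact mul_le_mul_of_nonneg_left (norm_le_pi_norm v i) (norm_nonneg _)
      _ = (∑ i, ‖L (Pi.single i 1)‖) * ‖v‖ := by rw [Finset.sum_mul]

lemma mderivList_eqOn_zero {V : Set (Fin k → ℝ)} (hV : IsOpen V) {f : (Fin k → ℝ) → ℝ}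
    (hf : Set.EqOn f 0 V) (l : List (Fin k)) : Set.EqOn (mderivList l f) 0 V := by
  induction l with
  | nil => exact hf
  | cons i l ih =>
      intro x hx
      show pderiv i (mderivList l f) x = 0
      unfold pderiv
      rw [Filter.EventuallyEq.fderiv_eq (ih.eventuallyEq_of_mem (hV.mem_nhds hx))]
      rw [show (0 : (Fin k → ℝ) → ℝ) = fun _ => (0:ℝ) from rfl, fderiv_fun_const]
      simp

lemma main_aux : ∀ (r : ℕ) (U : Set (Fin k → ℝ)), IsOpen U →
    ∀ (g : (Fin k → ℝ) → ℝ), ContDiffOn ℝ (r : ℕ) g U →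
    (∀ y ∉ U, g y = 0) →
    (∀ α : Fin k → ℕ, (∑ i, α i) ≤ r →
      ∀ (ys : ℕ → Fin k → ℝ) (ystar : Fin k → ℝ), (∀ m, ys m ∈ U) → ystar ∉ U →
        Tendsto ys atTop (𝓝 ystar) →
        Tendsto (fun m => mderiv α g (ys m)) atTop (𝓝 0)) →
    ContDiff ℝ (r : ℕ) g := by
  intro r
  induction r with
  | zero =>
      intro U hU g hgU hg0 hlim
      rw [show ((0:ℕ) : WithTop ℕ∞) = 0 from rfl, contDiff_zero, continuous_iff_continuousAt]
      intro x
      by_cases hx : x ∈ U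
      · exact ((contDiffOn_zero.1 (by exact_mod_cast hgU)).continuousAt (hU.mem_nhds hx))
      · have hseq : ∀ (ys : ℕ → Fin k → ℝ), (∀ m, ys m ∈ U) → Tendsto ys atTop (𝓝 x) →
            Tendsto (fun m => g (ys m)) atTop (𝓝 0) := by
          intro ys hys hty
          have := hlim (fun _ => 0) (by simp) ys x hys hx hty
          rwa [mderiv_zero] at this
        have := tendsto_nhds_of_seq hg0 hx hseq
        rw [ContinuousAt, hg0 x hx]
        exact this
  | succ r ih =>
      intro U hU g hgU hg0 hlim
      have hdiffU : ∀ x ∈ U, DifferentiableAt ℝ g x := by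
        intro x hx
        have h1 : DifferentiableOn ℝ g U := hgU.differentiableOn (by
          simp)
        exact h1.differentiableAt (hU.mem_nhds hx)
      have hpd_tendsto : ∀ i : Fin k, ∀ ystar ∉ U,
          Tendsto (pderiv i g) (𝓝[U] ystar) (𝓝 0) := by
        intro i ystar hy
        apply tendsto_nhdsWithin_of_seq hy
        intro ys hys hty
        have := hlim (Pi.single i 1) (by rw [sum_single_one]; omega) ys ystar hys hy hty
        rwa [mderiv_single] at this
      have hgrad : ∀ ystar ∉ U, Tendsto (fun z => ‖fderiv ℝ g z‖) (𝓝[U] ystar) (𝓝 0) := by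
        intro ystar hy
        have hsum : Tendsto (fun z => ∑ i, ‖pderiv i g z‖) (𝓝[U] ystar) (𝓝 0) := by
          have := tendsto_finset_sum (Finset.univ)
            (fun (i : Fin k) _ => (hpd_tendsto i ystar hy).norm)
          simpa using this
        apply squeeze_zero' (Filter.Eventually.of_forall (fun z => norm_nonneg _)) _ hsum
        filter_upwards [eventually_mem_nhdsWithin] with z hz
        have := opnorm_le_sum (fderiv ℝ g z)
        exact this
      have hcont0 : ∀ z ∉ U, Tendsto g (𝓝 z) (𝓝 0) := by
        intro z hz
        apply tendsto_nhds_of_seq hg0 hz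
        intro ys hys hty
        have := hlim (fun _ => 0) (by simp) ys z hys hz hty
        rwa [mderiv_zero] at this
      have hdGlobal : ∀ y ∉ U, HasFDerivAt g (0 : (Fin k → ℝ) →L[ℝ] ℝ) y := by
        intro y hy
        exact hasFDerivAt_zero_of_boundary hU
          (fun x hx => (hdiffU x hx).differentiableWithinAt) hg0 hcont0 hgrad hy
      have hDiff : Differentiable ℝ g := by
        intro x
        by_cases hx : x ∈ U
        · exact hdiffU x hx
        · exact (hdGlobal x hx).differentiableAt
      have hpd0 : ∀ (i : Fin k), ∀ y ∉ U, pderiv i g y = 0 := by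
        intro i y hy
        unfold pderiv
        rw [(hdGlobal y hy).fderiv]
        rfl
      have hpdCr : ∀ i : Fin k, ContDiff ℝ (r : ℕ) (pderiv i g) := by
        intro i
        apply ih U hU (pderiv i g) (contDiffOn_pderiv hU (by exact_mod_cast hgU) i) (hpd0 i)
        intro α hα ys ystar hys hy hty
        have hsumα : (∑ j, (α + Pi.single i 1 : Fin k → ℕ) j) = (∑ j, α j) + 1 := by
          simp only [Pi.add_apply]
          rw [Finset.sum_add_distrib, sum_single_one]
        have h2 := hlim (α + Pi.single i 1) (by omega) ys ystar hys hy hty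
        rw [mderiv_eq_mderivList] at h2
        have hlen : (toList (α + Pi.single i 1)).length ≤ r + 1 := by
          rw [toList_length, hsumα]; omega
        have heq : Set.EqOn (mderivList (toList (α + Pi.single i 1)) g)
            (mderivList (toList α ++ [i]) g) U :=
          mderivList_perm hU (toList_perm α i) (by exact_mod_cast hgU) hlen
        have hfold : mderivList (toList α ++ [i]) g = mderiv α (pderiv i g) := by
          rw [mderivList_append, mderiv_eq_mderivList]
          rfl
        apply Tendsto.congr _ h2
        intro m
        rw [heq (hys m), hfold]
      have hfd_eq : (fderiv ℝ g) = fun x =>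
          ∑ i, pderiv i g x • (ContinuousLinearMap.proj i : (Fin k → ℝ) →L[ℝ] ℝ) := by
        funext x
        exact clm_eq_sum_proj (fderiv ℝ g x)
      rw [show ((r + 1 : ℕ) : WithTop ℕ∞) = (r : ℕ) + 1 by push_cast; rfl,
        contDiff_succ_iff_fderiv]
      refine ⟨hDiff, by simp, ?_⟩
      rw [hfd_eq]
      exact ContDiff.sum fun i _ => (hpdCr i).smul contDiff_const

/-- **Zero extension of a `C^r` function.**  Let `U ⊆ ℝ^k` be open (`k ≥ 1`),
`g : ℝ^k → ℝ` be `r` times continuously differentiable on `U`, vanish on `Uᶜ`,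
and suppose every derivative `D^α g` with `|α| ≤ r` tends to `0` along any
sequence in `U` converging to a point of `Uᶜ`.  Then `g ∈ C^r(ℝ^k)` and all
derivatives `D^α g` with `|α| ≤ r` vanish on `Uᶜ`. -/
theorem zero_extension_Cr {k : ℕ} (hk : 1 ≤ k) (r : ℕ)
    (U : Set (Fin k → ℝ)) (hUopen : IsOpen U)
    (g : (Fin k → ℝ) → ℝ)
    (hgU : ContDiffOn ℝ (r : ℕ∞) g U)
    (hg0 : ∀ y ∉ U, g y = 0)
    (hlim : ∀ α : Fin k → ℕ, (∑ i, α i) ≤ r →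
      ∀ (ys : ℕ → Fin k → ℝ) (ystar : Fin k → ℝ), (∀ m, ys m ∈ U) → ystar ∉ U →
        Filter.Tendsto ys atTop (nhds ystar) →
        Filter.Tendsto (fun m => mderiv α g (ys m)) atTop (nhds 0)) :
    ContDiff ℝ (r : ℕ∞) g ∧
      ∀ α : Fin k → ℕ, (∑ i, α i) ≤ r → ∀ y ∉ U, mderiv α g y = 0 := by
  have hsmooth : ContDiff ℝ (r : ℕ) g := main_aux r U hUopen g (by exact_mod_cast hgU) hg0 hlim
  refine ⟨by exact_mod_cast hsmooth, ?_⟩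
  intro α hα y hy
  by_cases hyc : y ∈ closure U
  · obtain ⟨ys, hys, hty⟩ := mem_closure_iff_seq_limit.1 hyc
    have h1 := hlim α hα ys y hys hy hty
    have hcont : Continuous (mderiv α g) := by
      rw [mderiv_eq_mderivList]
      have hlen : (toList α).length ≤ r := by rw [toList_length]; exact hα
      have h2 := contDiffOn_mderivList isOpen_univ (toList α)
        (contDiffOn_univ.2 hsmooth) hlen
      exact (contDiffOn_univ.1 h2).continuous
    have h3 : Tendsto (fun m => mderiv α g (ys m)) atTop (𝓝 (mderiv α g y)) :=
      (hcont.tendsto y).comp hty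
    exact tendsto_nhds_unique h3 h1
  · have hV : IsOpen (closure U)ᶜ := isClosed_closure.isOpen_compl
    have hgV : Set.EqOn g 0 (closure U)ᶜ := fun z hz => hg0 z (fun h => hz (subset_closure h))
    rw [mderiv_eq_mderivList]
    exact mderivList_eqOn_zero hV hgV (toList α) hyc
end

section
/- Let m be a positive integer and define φ : ℝ² → ℝ by φ(x_1, x_2) = exp(x_1) − x_2^m sin(1/x_2) for x_2 > 0 and φ(x_1, x_2) = exp(x_1) for x_2 ≤ 0. Then φ(x_1, x_2) is strictly increasing in x_1 for each fixed x_2; the set U_1 := {x_2 ∈ ℝ : φ(x_1, x_2) = 0 for some x_1 ∈ ℝ} equals (1/π, ∞) ∪ ⋃_{k=1}^∞ (1/((2k+1)π), 1/(2kπ)); and for every x_2 ∈ U_1 the unique solution x_1 of φ(x_1, x_2) = 0 is x_1 = ψ(x_2) := m·log(x_2) + log(sin(1/x_2)). -/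
open Real Set

lemma sin_pos_iff_aux {t : ℝ} (ht : 0 < t) :
    0 < Real.sin t ↔ ∃ k : ℕ, 2 * k * π < t ∧ t < (2 * k + 1) * π := by
  constructor
  · intro hs
    set n : ℤ := ⌊t / (2 * π)⌋ with hn
    have h2π : 0 < 2 * π := by positivity
    have hge : (n : ℝ) * (2 * π) ≤ t := by
      have := Int.floor_le (t / (2 * π))
      calc (n : ℝ) * (2 * π) ≤ t / (2 * π) * (2 * π) := by
            apply mul_le_mul_of_nonneg_right this h2π.le
        _ = t := by field_simp
    have hlt : t < ((n : ℝ) + 1) * (2 * π) := by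
      have := Int.lt_floor_add_one (t / (2 * π))
      calc t = t / (2 * π) * (2 * π) := by field_simp
        _ < ((n : ℝ) + 1) * (2 * π) := by
            apply mul_lt_mul_of_pos_right this h2π
    set s : ℝ := t - n * (2 * π) with hsdef
    have hsin : Real.sin s = Real.sin t := by
      rw [hsdef, show t - (n : ℝ) * (2 * π) = t + (-n) * (2 * π) by ring]
      simpa using Real.sin_add_int_mul_two_pi t (-n)
    have hs0 : 0 ≤ s := by simp [hsdef]; linarith
    have hs2 : s < 2 * π := by simp [hsdef]; linarith
    have hspos : 0 < Real.sin s := hsin ▸ hs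
    have hslt : s < π := by
      by_contra h
      push_neg at h
      have : Real.sin s ≤ 0 := by
        have : Real.sin s = -Real.sin (s - π) := by
          rw [Real.sin_sub_pi]; ring
        rw [this]
        simp only [neg_nonpos]
        exact Real.sin_nonneg_of_nonneg_of_le_pi (by linarith) (by linarith)
      linarith
    have hsne : 0 < s := by
      rcases hs0.lt_or_eq with h | h
      · exact h
      · exfalso; rw [← h] at hspos; simp at hspos
    have hn0 : 0 ≤ n := by
      by_contra h
      push_neg at h
      have : (n : ℝ) + 1 ≤ 0 := by
        have : n + 1 ≤ 0 := h
        exact_mod_cast this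
      nlinarith [pi_pos]
    refine ⟨n.toNat, ?_, ?_⟩
    · have : ((n.toNat : ℤ) : ℝ) = (n : ℝ) := by rw [Int.toNat_of_nonneg hn0]
      push_cast at this ⊢
      rw [this]
      have : (n : ℝ) * (2 * π) < t := by linarith
      linarith [this]
    · have : ((n.toNat : ℤ) : ℝ) = (n : ℝ) := by rw [Int.toNat_of_nonneg hn0]
      push_cast at this ⊢
      rw [this]
      have : t < (n : ℝ) * (2 * π) + π := by linarith
      linarith
  · rintro ⟨k, h1, h2⟩
    have := Real.sin_pos_of_pos_of_lt_pi (x := t - 2 * k * π) (by linarith) (by linarith)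
    have heq : Real.sin (t - 2 * k * π) = Real.sin t := by
      rw [show t - 2 * (k : ℝ) * π = t + (-(k:ℤ)) * (2 * π) by push_cast; ring]
      simpa using Real.sin_add_int_mul_two_pi t (-(k:ℤ))
    linarith [heq ▸ this]

/-- **The example (2.8) of the paper.**  For `φ(x₁,x₂) = exp x₁ − x₂^m sin(1/x₂)`
(`x₂ > 0`) and `φ(x₁,x₂) = exp x₁` (`x₂ ≤ 0`), `m ≥ 1`:
`φ` is strictly increasing in `x₁`; the set
`U₁ = {x₂ : φ(x₁,x₂) = 0 for some x₁}` equals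
`(1/π, ∞) ∪ ⋃_{k ≥ 1} (1/((2k+1)π), 1/(2kπ))`; and on `U₁` the unique solution
of `φ(x₁,x₂) = 0` is `x₁ = ψ(x₂) = m log x₂ + log (sin (1/x₂))`. -/
theorem example_zero_set (m : ℕ) (hm : 1 ≤ m)
    (φ : ℝ → ℝ → ℝ)
    (hφpos : ∀ x₁ x₂, 0 < x₂ → φ x₁ x₂ = Real.exp x₁ - x₂ ^ m * Real.sin (1 / x₂))
    (hφnonpos : ∀ x₁ x₂, x₂ ≤ 0 → φ x₁ x₂ = Real.exp x₁) :
    (∀ x₂ : ℝ, StrictMono fun x₁ => φ x₁ x₂) ∧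
    ({x₂ : ℝ | ∃ x₁ : ℝ, φ x₁ x₂ = 0}
      = Ioi (1 / π) ∪ ⋃ k : ℕ, Ioo (1 / ((2 * (k + 1 : ℝ) + 1) * π)) (1 / (2 * (k + 1 : ℝ) * π))) ∧
    (∀ x₂ ∈ {x₂ : ℝ | ∃ x₁ : ℝ, φ x₁ x₂ = 0}, ∀ x₁ : ℝ,
      (φ x₁ x₂ = 0 ↔ x₁ = m * Real.log x₂ + Real.log (Real.sin (1 / x₂)))) := by
  have hπ : (0:ℝ) < π := pi_pos
  -- characterize the zero set
  have hkey : ∀ x₂ : ℝ, (∃ x₁ : ℝ, φ x₁ x₂ = 0) ↔ (0 < x₂ ∧ 0 < Real.sin (1 / x₂)) := by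
    intro x₂
    constructor
    · rintro ⟨x₁, hx₁⟩
      rcases le_or_gt x₂ 0 with h | h
      · rw [hφnonpos x₁ x₂ h] at hx₁
        exact absurd hx₁ (Real.exp_pos x₁).ne'
      · refine ⟨h, ?_⟩
        rw [hφpos x₁ x₂ h] at hx₁
        have hpos : 0 < x₂ ^ m * Real.sin (1 / x₂) := by
          have := Real.exp_pos x₁; linarith
        have hxm : 0 < x₂ ^ m := pow_pos h m
        by_contra h'
        push_neg at h'
        nlinarith
    · rintro ⟨h, hs⟩
      have hxm : 0 < x₂ ^ m := pow_pos h m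
      refine ⟨Real.log (x₂ ^ m * Real.sin (1 / x₂)), ?_⟩
      rw [hφpos _ x₂ h, Real.exp_log (by positivity)]
      ring
  refine ⟨?_, ?_, ?_⟩
  · -- strict monotonicity
    intro x₂ a b hab
    rcases le_or_gt x₂ 0 with h | h
    · simpa only [hφnonpos a x₂ h, hφnonpos b x₂ h] using Real.exp_lt_exp.2 hab
    · simp only [hφpos a x₂ h, hφpos b x₂ h]
      have := Real.exp_lt_exp.2 hab
      linarith
  · -- the set equality
    ext x₂
    simp only [mem_setOf_eq, hkey x₂, mem_union, mem_Ioi, mem_iUnion, mem_Ioo]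
    constructor
    · rintro ⟨hx, hs⟩
      have ht : 0 < 1 / x₂ := by positivity
      obtain ⟨k, h1, h2⟩ := (sin_pos_iff_aux ht).1 hs
      rcases Nat.eq_zero_or_pos k with rfl | hk
      · left
        simp only [Nat.cast_zero] at h2
        rw [div_lt_iff₀ hx] at h2
        rw [div_lt_iff₀ hπ]
        nlinarith
      · right
        refine ⟨k - 1, ?_, ?_⟩
        · have hkc : ((k - 1 : ℕ) : ℝ) + 1 = (k : ℝ) := by
            have : 1 ≤ k := hk
            push_cast [Nat.cast_sub this]; ring
          rw [hkc, div_lt_iff₀ (by positivity)]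
          rw [div_lt_iff₀ hx] at h2
          nlinarith
        · have hkc : ((k - 1 : ℕ) : ℝ) + 1 = (k : ℝ) := by
            have : 1 ≤ k := hk
            push_cast [Nat.cast_sub this]; ring
          rw [hkc]
          have hkpos : (0:ℝ) < 2 * k * π := by
            have : (1:ℝ) ≤ (k:ℝ) := by exact_mod_cast hk
            nlinarith
          rw [lt_div_iff₀ hkpos]
          rw [lt_div_iff₀ hx] at h1
          nlinarith
    · rintro (h | ⟨k, h1, h2⟩)
      · have hx : 0 < x₂ := lt_trans (by positivity) h
        refine ⟨hx, ?_⟩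
        have ht : 0 < 1 / x₂ := by positivity
        apply (sin_pos_iff_aux ht).2
        refine ⟨0, by simpa using ht, ?_⟩
        push_cast
        rw [div_lt_iff₀ hπ] at h
        rw [div_lt_iff₀ hx]
        nlinarith
      · have hc : (0:ℝ) < 2 * ((k:ℝ) + 1) * π := by positivity
        have hc' : (0:ℝ) < (2 * ((k:ℝ) + 1) + 1) * π := by positivity
        have hx : 0 < x₂ := lt_trans (by positivity) h1
        refine ⟨hx, ?_⟩
        have ht : 0 < 1 / x₂ := by positivity
        apply (sin_pos_iff_aux ht).2
        refine ⟨k + 1, ?_, ?_⟩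
        · push_cast
          rw [lt_div_iff₀ hx]
          rw [lt_div_iff₀ hc] at h2
          nlinarith
        · push_cast
          rw [div_lt_iff₀ hx]
          rw [div_lt_iff₀ hc'] at h1
          nlinarith
  · -- uniqueness of the solution
    intro x₂ hx₂ x₁
    obtain ⟨hx, hs⟩ := (hkey x₂).1 hx₂
    have hxm : 0 < x₂ ^ m := pow_pos hx m
    rw [hφpos x₁ x₂ hx]
    constructor
    · intro h
      have hexp : Real.exp x₁ = x₂ ^ m * Real.sin (1 / x₂) := by linarith
      have := congrArg Real.log hexp
      rw [Real.log_exp, Real.log_mul hxm.ne' hs.ne', Real.log_pow] at this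
      simpa using this
    · intro h
      rw [h, Real.exp_add, ← Real.log_pow, Real.exp_log hxm, Real.exp_log hs]
      ring
end

section
/- Let d ≥ 2, j ∈ {1,…,d}, let ρ be a continuous, strictly positive probability density on ℝ, let φ : ℝ^d → ℝ be continuously differentiable with (D_j φ)(x) > 0 for all x and φ(x_j, y) → +∞ as x_j → +∞ for each fixed y ∈ ℝ^{d−1}, and let θ : ℝ^d → ℝ be continuous with |θ(x_j, y) ρ(x_j)| ≤ κ(x_j) for all (x_j, y) and some integrable function κ on ℝ. Then the function (P_j f)(y) := ∫_ℝ θ(x_j, y)·ind(φ(x_j, y))·ρ(x_j) dx_j is continuous on all of ℝ^{d−1}. -/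
open MeasureTheory Filter Topology ENNReal

/-- **Continuity of the preintegrated function.**  With `d = n + 1 ≥ 2`,
`ρ` a continuous strictly positive probability density, `φ ∈ C¹` with `D_j φ > 0`
and `φ(x_j, y) → +∞` as `x_j → +∞`, and `θ` continuous with
`|θ(x_j,y) ρ(x_j)| ≤ κ(x_j)` for an integrable `κ`, the preintegrated function
`(P_j f)(y) = ∫_ℝ θ(x_j,y) ind(φ(x_j,y)) ρ(x_j) dx_j` is continuous on `ℝ^{d−1}`. -/
theorem preintegration_continuous {n : ℕ} (hn : 1 ≤ n) (j : Fin (n + 1))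
    (ρ : ℝ → ℝ) (hρc : Continuous ρ) (hρpos : ∀ t, 0 < ρ t) (hρ1 : ∫ t, ρ t = 1)
    (φ : (Fin (n + 1) → ℝ) → ℝ) (hφ : ContDiff ℝ 1 φ)
    (hmono : ∀ x, 0 < pderiv j φ x)
    (hgrow : ∀ y : Fin n → ℝ, Filter.Tendsto (fun t => φ (j.insertNth t y)) atTop atTop)
    (θ : (Fin (n + 1) → ℝ) → ℝ) (hθc : Continuous θ)
    (κ : ℝ → ℝ) (hκ : Integrable κ)
    (hdom : ∀ (t : ℝ) (y : Fin n → ℝ), |θ (j.insertNth t y) * ρ t| ≤ κ t) :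
    Continuous fun y : Fin n → ℝ =>
      ∫ t : ℝ, θ (j.insertNth t y)
        * (if 0 < φ (j.insertNth t y) then (1 : ℝ) else 0) * ρ t := by
  have hinsC : ∀ t : ℝ, Continuous fun y : Fin n → ℝ => (j.insertNth t y : Fin (n+1) → ℝ) :=
    fun t => Continuous.finInsertNth (A := fun _ : Fin (n+1) => ℝ) j continuous_const continuous_id
  have hinsT : ∀ y : Fin n → ℝ, Continuous fun t : ℝ => (j.insertNth t y : Fin (n+1) → ℝ) :=
    fun y => Continuous.finInsertNth (A := fun _ : Fin (n+1) => ℝ) j continuous_id continuous_const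
  rw [continuous_iff_continuousAt]
  intro y₀
  -- strict monotonicity of `t ↦ φ (insertNth t y₀)`
  have hline : ∀ s : ℝ, j.insertNth s y₀ = (fun s : ℝ => (j.insertNth 0 y₀ : Fin (n+1) → ℝ) + s • (Pi.single j 1 : Fin (n+1) → ℝ)) s := by
    intro s
    funext i
    rcases eq_or_ne i j with rfl | h
    · simp
    · obtain ⟨k, rfl⟩ := Fin.exists_succAbove_eq h
      simp [Fin.insertNth_apply_succAbove, Pi.single_eq_of_ne (Fin.succAbove_ne j k)]
  have hderiv : ∀ t : ℝ, HasDerivAt (fun t => φ (j.insertNth t y₀))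
      (pderiv j φ (j.insertNth t y₀)) t := by
    intro t
    have h1 : HasDerivAt (fun s : ℝ => j.insertNth s y₀) (Pi.single j 1 : Fin (n+1) → ℝ) t := by
      have := ((hasDerivAt_id t).smul_const (Pi.single j 1 : Fin (n+1) → ℝ)).const_add (j.insertNth 0 y₀)
      rw [one_smul] at this
      refine HasDerivAt.congr_of_eventuallyEq this ?_
      filter_upwards with s using (hline s)
    exact ((hφ.differentiable one_ne_zero _).hasFDerivAt).comp_hasDerivAt t h1
  have hsm : StrictMono fun t => φ (j.insertNth t y₀) := by
    apply strictMono_of_deriv_pos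
    intro t
    rw [(hderiv t).deriv]
    exact hmono _
  have hae : ∀ᵐ t : ℝ, φ (j.insertNth t y₀) ≠ 0 := by
    have hsub : {t : ℝ | φ (j.insertNth t y₀) = 0}.Subsingleton := fun a ha b hb =>
      hsm.injective (ha.trans hb.symm)
    rw [ae_iff]
    simpa using hsub.measure_zero volume
  apply continuousAt_of_dominated (bound := κ) _ _ hκ
  · filter_upwards [hae] with t ht
    have hc : ContinuousAt (fun y => φ (j.insertNth t y)) y₀ :=
      (hφ.continuous.comp (hinsC t)).continuousAt
    have hev : ∀ᶠ y in 𝓝 y₀, (if 0 < φ (j.insertNth t y) then (1 : ℝ) else 0)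
        = (if 0 < φ (j.insertNth t y₀) then (1 : ℝ) else 0) := by
      rcases ht.lt_or_gt with h | h
      · filter_upwards [hc.eventually_lt continuousAt_const h] with y hy
        simp [not_lt.mpr hy.le, not_lt.mpr h.le]
      · filter_upwards [continuousAt_const.eventually_lt hc h] with y hy
        simp [hy, h]
    have hc2 : ContinuousAt (fun y => θ (j.insertNth t y)
        * (if 0 < φ (j.insertNth t y₀) then (1 : ℝ) else 0) * ρ t) y₀ :=
      (((hθc.comp (hinsC t)).continuousAt.mul continuousAt_const).mul continuousAt_const)
    exact hc2.congr (hev.mono fun y hy => by simp only [hy])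
  · filter_upwards with y
    have hindm : Measurable fun t : ℝ => (if 0 < φ (j.insertNth t y) then (1 : ℝ) else 0) := by
      refine Measurable.ite ?_ measurable_const measurable_const
      exact measurableSet_lt measurable_const (hφ.continuous.comp (hinsT y)).measurable
    exact (((hθc.comp (hinsT y)).measurable.mul hindm).mul hρc.measurable).aestronglyMeasurable
  · filter_upwards with y
    filter_upwards with t
    rw [Real.norm_eq_abs]
    by_cases h : 0 < φ (j.insertNth t y)
    · simpa [h] using hdom t y
    · simp only [h, if_false, mul_zero, zero_mul, abs_zero]
      exact (abs_nonneg _).trans (hdom t y)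
end

section
/- Let d ≥ 2 and j, k ∈ {1,…,d} with k ≠ j. Let ρ be a continuous, strictly positive probability density on ℝ, and let θ, φ : ℝ^d → ℝ be continuously differentiable with (D_j φ)(x) > 0 for all x ∈ ℝ^d. Let U_j := {y ∈ ℝ^{d−1} : φ(x_j, y) = 0 for some x_j}, assumed nonempty, and let ψ : U_j → ℝ be the unique C¹ function with φ(ψ(y), y) = 0 on U_j. Suppose that for every compact set V ⊂ U_j there exists an integrable function κ_V on ℝ with |θ(t, y)ρ(t)| ≤ κ_V(t) and |(D_k θ)(t, y)ρ(t)| ≤ κ_V(t) for all y ∈ V and t ∈ ℝ. Then the function g(y) := −∫_{−∞}^{ψ(y)} θ(t, y) ρ(t) dt is partially differentiable with respect to y_k on U_j, with (D_k g)(y) = −∫_{−∞}^{ψ(y)} (D_k θ)(t, y) ρ(t) dt + θ(ψ(y), y) · (D_k φ)(ψ(y), y)/(D_j φ)(ψ(y), y) · ρ(ψ(y)) for all y ∈ U_j. -/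
open MeasureTheory Filter Topology ENNReal Set

lemma insertNth_single_eq {n : ℕ} (j : Fin (n+1)) (k : Fin n) (a : ℝ) :
    Fin.insertNth (α := fun _ => ℝ) j a (Pi.single k (1:ℝ))
      = a • (Pi.single j 1 : Fin (n+1) → ℝ) + Pi.single (j.succAbove k) 1 := by
  funext i
  refine Fin.succAboveCases j ?_ ?_ i
  · rw [Fin.insertNth_apply_same]
    simp [Pi.single_eq_of_ne (Ne.symm (Fin.succAbove_ne j k))]
  · intro m
    rw [Fin.insertNth_apply_succAbove]
    simp only [Pi.add_apply, Pi.smul_apply, smul_eq_mul,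
      Pi.single_eq_of_ne (Fin.succAbove_ne j m), mul_zero, zero_add]
    rcases eq_or_ne m k with rfl | hmk
    · simp
    · rw [Pi.single_eq_of_ne hmk, Pi.single_eq_of_ne
        (fun h => hmk (Fin.succAbove_right_injective h))]

/-- Derivative of a curve `s ↦ insertNth (g s) (update y k s)`. -/
lemma hasDerivAt_insertNth_curve {n : ℕ} (j : Fin (n+1)) (k : Fin n) (y : Fin n → ℝ)
    {g : ℝ → ℝ} {a s : ℝ} (hg : HasDerivAt g a s) :
    HasDerivAt (fun s => j.insertNth (g s) (Function.update y k s))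
      (Fin.insertNth (α := fun _ => ℝ) j a (Pi.single k (1:ℝ))) s := by
  rw [hasDerivAt_pi]
  intro i
  refine Fin.succAboveCases j ?_ ?_ i
  · simp only [Fin.insertNth_apply_same]
    exact hg
  · intro m
    simp only [Fin.insertNth_apply_succAbove]
    rcases eq_or_ne m k with rfl | hmk
    · simp only [Pi.single_eq_same]
      exact (hasDerivAt_id s).congr_of_eventuallyEq
        (Eventually.of_forall fun x => by simp)
    · rw [Pi.single_eq_of_ne hmk]
      exact HasDerivAt.congr_of_eventuallyEq (hasDerivAt_const s (y m))
        (Eventually.of_forall fun x => by simp [Function.update_of_ne hmk])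

lemma hasDerivAt_insertNth_update {n : ℕ} (j : Fin (n+1)) (k : Fin n) (y : Fin n → ℝ)
    (t : ℝ) (s : ℝ) :
    HasDerivAt (fun s => j.insertNth t (Function.update y k s))
      (Pi.single (M := fun _ => ℝ) (j.succAbove k) (1:ℝ)) s := by
  have h := hasDerivAt_insertNth_curve j k y (hasDerivAt_const s t)
  rwa [insertNth_single_eq, zero_smul, zero_add] at h

lemma hasDerivAt_insertNth_t {n : ℕ} (j : Fin (n+1)) (y : Fin n → ℝ) (t : ℝ) :
    HasDerivAt (fun t => j.insertNth t y) (Pi.single (M := fun _ => ℝ) j (1:ℝ)) t := by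
  rw [hasDerivAt_pi]
  intro i
  refine Fin.succAboveCases j ?_ ?_ i
  · simp only [Fin.insertNth_apply_same, Pi.single_eq_same]
    exact hasDerivAt_id t
  · intro m
    simp only [Fin.insertNth_apply_succAbove, Pi.single_eq_of_ne (Fin.succAbove_ne j m)]
    exact hasDerivAt_const t (y m)

/-- The implicit domain `U_j` is open. -/
lemma isOpen_U {n : ℕ} (j : Fin (n+1)) (φ : (Fin (n + 1) → ℝ) → ℝ)
    (hφ : ContDiff ℝ 1 φ) (hmono : ∀ x, 0 < pderiv j φ x) :
    IsOpen {y : Fin n → ℝ | ∃ t : ℝ, φ (j.insertNth t y) = 0} := by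
  have hφd : Differentiable ℝ φ := hφ.differentiable one_ne_zero
  rw [isOpen_iff_mem_nhds]
  rintro y₀ ⟨t₀, ht₀⟩
  have hq : ∀ (y' : Fin n → ℝ) (t : ℝ),
      HasDerivAt (fun t => φ (j.insertNth t y')) (pderiv j φ (j.insertNth t y')) t :=
    fun y' t => (hφd _).hasFDerivAt.comp_hasDerivAt t (hasDerivAt_insertNth_t j y' t)
  have hsm : StrictMono (fun t => φ (j.insertNth t y₀)) :=
    strictMono_of_hasDerivAt_pos (hq y₀) (fun t => hmono _)
  have h1 : φ (j.insertNth (t₀ - 1) y₀) < 0 := by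
    have := hsm (show t₀ - 1 < t₀ by linarith)
    simpa [ht₀] using this
  have h2 : 0 < φ (j.insertNth (t₀ + 1) y₀) := by
    have := hsm (show t₀ < t₀ + 1 by linarith)
    simpa [ht₀] using this
  have hco : ∀ t : ℝ, Continuous fun y' : Fin n → ℝ => φ (j.insertNth t y') :=
    fun t => hφ.continuous.comp (continuous_const.finInsertNth j continuous_id)
  have hW1 : IsOpen {y' : Fin n → ℝ | φ (j.insertNth (t₀ - 1) y') < 0} :=
    isOpen_lt (hco _) continuous_const
  have hW2 : IsOpen {y' : Fin n → ℝ | 0 < φ (j.insertNth (t₀ + 1) y')} :=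
    isOpen_lt continuous_const (hco _)
  refine mem_of_superset ((hW1.inter hW2).mem_nhds ⟨h1, h2⟩) ?_
  rintro y' ⟨hy1, hy2⟩
  have hcj : ContinuousOn (fun t => φ (j.insertNth t y')) (Icc (t₀ - 1) (t₀ + 1)) :=
    (hφ.continuous.comp (continuous_id.finInsertNth j continuous_const)).continuousOn
  have h0 : (0:ℝ) ∈ Icc (φ (j.insertNth (t₀-1) y')) (φ (j.insertNth (t₀+1) y')) :=
    ⟨le_of_lt hy1, le_of_lt hy2⟩
  obtain ⟨t, _, ht⟩ := intermediate_value_Icc (show t₀ - 1 ≤ t₀ + 1 by linarith) hcj h0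
  exact ⟨t, ht⟩

/-- **Differentiation of the preintegrated remainder (formula (7.6)).**
With `d = n + 1 ≥ 2`, the index `k ≠ j` of the paper encoded as `j.succAbove k`
(`k : Fin n`), `ρ` a continuous strictly positive probability density,
`θ, φ ∈ C¹(ℝ^d)` with `D_j φ > 0`, `ψ` the `C¹` implicit solution on
`U = U_j ≠ ∅`, and a local domination hypothesis on compact subsets of `U`,
the function `g(y) = −∫_{−∞}^{ψ(y)} θ(t,y) ρ(t) dt` is partially differentiable
with respect to `y_k` on `U` with
`D_k g(y) = −∫_{−∞}^{ψ(y)} D_kθ(t,y) ρ(t) dt + θ(ψ(y),y) (D_kφ/D_jφ)(ψ(y),y) ρ(ψ(y))`. -/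
theorem deriv_of_preintegrated_remainder {n : ℕ} (hn : 1 ≤ n)
    (j : Fin (n + 1)) (k : Fin n)
    (ρ : ℝ → ℝ) (hρc : Continuous ρ) (hρpos : ∀ t, 0 < ρ t) (hρ1 : ∫ t, ρ t = 1)
    (θ φ : (Fin (n + 1) → ℝ) → ℝ) (hθ : ContDiff ℝ 1 θ) (hφ : ContDiff ℝ 1 φ)
    (hmono : ∀ x, 0 < pderiv j φ x)
    (U : Set (Fin n → ℝ)) (hU : U = {y : Fin n → ℝ | ∃ t : ℝ, φ (j.insertNth t y) = 0})
    (hUne : U.Nonempty)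
    (ψ : (Fin n → ℝ) → ℝ) (hψ : ∀ y ∈ U, φ (j.insertNth (ψ y) y) = 0)
    (hψC : ContDiffOn ℝ 1 ψ U)
    (hdom : ∀ V : Set (Fin n → ℝ), V ⊆ U → IsCompact V →
      ∃ κ : ℝ → ℝ, Integrable κ ∧ ∀ y ∈ V, ∀ t : ℝ,
        |θ (j.insertNth t y) * ρ t| ≤ κ t ∧
        |pderiv (j.succAbove k) θ (j.insertNth t y) * ρ t| ≤ κ t) :
    ∀ y ∈ U, HasDerivAt
      (fun s : ℝ => -∫ t in Iio (ψ (Function.update y k s)),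
        θ (j.insertNth t (Function.update y k s)) * ρ t)
      (-(∫ t in Iio (ψ y), pderiv (j.succAbove k) θ (j.insertNth t y) * ρ t)
        + θ (j.insertNth (ψ y) y)
          * (pderiv (j.succAbove k) φ (j.insertNth (ψ y) y)
              / pderiv j φ (j.insertNth (ψ y) y))
          * ρ (ψ y))
      (y k) := by
  classical
  intro y hy
  have hθd : Differentiable ℝ θ := hθ.differentiable one_ne_zero
  have hφd : Differentiable ℝ φ := hφ.differentiable one_ne_zero
  have hUopen : IsOpen U := hU ▸ isOpen_U j φ hφ hmono
  set s₀ : ℝ := y k with hs₀def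
  set c : ℝ := ψ y with hcdef
  set x₀ : Fin (n+1) → ℝ := j.insertNth c y with hx₀def
  have hupd0 : Function.update y k s₀ = y := Function.update_eq_self k y
  have hcont_upd : Continuous (fun s : ℝ => Function.update y k s) :=
    continuous_const.update k continuous_id
  -- a closed ball around s₀ staying in U
  obtain ⟨ε₀, hε₀pos, hball⟩ :
      ∃ ε > (0:ℝ), ∀ s ∈ Metric.closedBall s₀ ε, Function.update y k s ∈ U := by
    have hUy : U ∈ 𝓝 (Function.update y k s₀) := by rw [hupd0]; exact hUopen.mem_nhds hy
    have hpre : (fun s : ℝ => Function.update y k s) ⁻¹' U ∈ 𝓝 s₀ :=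
      hcont_upd.continuousAt.preimage_mem_nhds hUy
    obtain ⟨ε, hε, h⟩ := Metric.mem_nhds_iff.1 hpre
    exact ⟨ε/2, by positivity, fun s hs => h (Metric.mem_ball.2
      (lt_of_le_of_lt (Metric.mem_closedBall.1 hs) (by linarith)))⟩
  set V : Set (Fin n → ℝ) := (fun s : ℝ => Function.update y k s) '' Metric.closedBall s₀ ε₀
    with hVdef
  have hVU : V ⊆ U := by rintro _ ⟨s, hs, rfl⟩; exact hball s hs
  have hVcomp : IsCompact V := (isCompact_closedBall _ _).image hcont_upd
  obtain ⟨κ, hκint, hκ⟩ := hdom V hVU hVcomp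
  have hmemV : ∀ s ∈ Metric.closedBall s₀ ε₀, Function.update y k s ∈ V :=
    fun s hs => ⟨s, hs, rfl⟩
  -- derivative of b := ψ ∘ update
  have hψdiff : DifferentiableAt ℝ ψ y :=
    (hψC.contDiffAt (hUopen.mem_nhds hy)).differentiableAt one_ne_zero
  set c₀ : ℝ := fderiv ℝ ψ y (Pi.single k 1) with hc₀def
  set b : ℝ → ℝ := fun s => ψ (Function.update y k s) with hbdef
  have hb : HasDerivAt b c₀ s₀ := by
    have h1 : HasFDerivAt ψ (fderiv ℝ ψ y) (Function.update y k s₀) := by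
      rw [hupd0]; exact hψdiff.hasFDerivAt
    exact h1.comp_hasDerivAt s₀ (hasDerivAt_update y k s₀)
  have hbs₀ : b s₀ = c := by simp only [hbdef, hupd0, hcdef]
  -- value of c₀ via implicit differentiation
  have hγ : HasDerivAt (fun s => j.insertNth (b s) (Function.update y k s))
      (Fin.insertNth (α := fun _ => ℝ) j c₀ (Pi.single k (1:ℝ))) s₀ :=
    hasDerivAt_insertNth_curve j k y hb
  have hγ0 : j.insertNth (b s₀) (Function.update y k s₀) = x₀ := by
    rw [hupd0, hbs₀]
  have hφγ : HasDerivAt (fun s => φ (j.insertNth (b s) (Function.update y k s)))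
      (fderiv ℝ φ x₀ (Fin.insertNth (α := fun _ => ℝ) j c₀ (Pi.single k (1:ℝ)))) s₀ := by
    have h1 : HasFDerivAt φ (fderiv ℝ φ x₀) (j.insertNth (b s₀) (Function.update y k s₀)) := by
      rw [hγ0]; exact (hφd _).hasFDerivAt
    exact h1.comp_hasDerivAt s₀ hγ
  have hzero : (fun s => φ (j.insertNth (b s) (Function.update y k s)))
      =ᶠ[𝓝 s₀] fun _ => (0:ℝ) := by
    have hev : ∀ᶠ s in 𝓝 s₀, Function.update y k s ∈ U := by
      have hUy : U ∈ 𝓝 (Function.update y k s₀) := by rw [hupd0]; exact hUopen.mem_nhds hy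
      exact hcont_upd.continuousAt.preimage_mem_nhds hUy
    exact hev.mono fun s hs => hψ _ hs
  have heq0 : fderiv ℝ φ x₀ (Fin.insertNth (α := fun _ => ℝ) j c₀ (Pi.single k (1:ℝ))) = 0 :=
    hφγ.unique ((hasDerivAt_const s₀ (0:ℝ)).congr_of_eventuallyEq hzero)
  have hkey : c₀ * pderiv j φ x₀ + pderiv (j.succAbove k) φ x₀ = 0 := by
    rw [insertNth_single_eq, map_add, ContinuousLinearMap.map_smul] at heq0
    simpa [pderiv, smul_eq_mul] using heq0
  have hDjne : pderiv j φ x₀ ≠ 0 := (hmono x₀).ne'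
  have hc₀ : c₀ = -(pderiv (j.succAbove k) φ x₀ / pderiv j φ x₀) := by
    field_simp
    linarith [hkey]
  -- the integrand and its s-derivative
  set F : ℝ → ℝ → ℝ := fun s t => θ (j.insertNth t (Function.update y k s)) * ρ t with hFdef
  set F' : ℝ → ℝ → ℝ :=
    fun s t => pderiv (j.succAbove k) θ (j.insertNth t (Function.update y k s)) * ρ t
    with hF'def
  have hFc : ∀ s, Continuous (F s) := fun s =>
    (hθ.continuous.comp (continuous_id.finInsertNth j continuous_const)).mul hρc
  have hpdθc : Continuous (pderiv (j.succAbove k) θ) :=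
    (hθ.continuous_fderiv one_ne_zero).clm_apply continuous_const
  have hF'c : ∀ s, Continuous (F' s) := fun s =>
    (hpdθc.comp (continuous_id.finInsertNth j continuous_const)).mul hρc
  have hFbound : ∀ s ∈ Metric.closedBall s₀ ε₀, ∀ t, |F s t| ≤ κ t :=
    fun s hs t => (hκ _ (hmemV s hs) t).1
  have hF'bound : ∀ s ∈ Metric.closedBall s₀ ε₀, ∀ t, |F' s t| ≤ κ t :=
    fun s hs t => (hκ _ (hmemV s hs) t).2
  have hFint : ∀ s ∈ Metric.closedBall s₀ ε₀, Integrable (F s) := fun s hs =>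
    hκint.mono' (hFc s).aestronglyMeasurable
      (Eventually.of_forall fun t => by rw [Real.norm_eq_abs]; exact hFbound s hs t)
  have hs₀mem : s₀ ∈ Metric.closedBall s₀ ε₀ := Metric.mem_closedBall_self hε₀pos.le
  -- Part A : differentiation under the integral over Iio c
  have hA := hasDerivAt_integral_of_dominated_loc_of_deriv_le (μ := volume.restrict (Iio c))
    (F := F) (F' := F') (x₀ := s₀) (bound := κ) (Metric.ball_mem_nhds s₀ hε₀pos)
    (Eventually.of_forall fun s => (hFc s).aestronglyMeasurable.restrict)
    ((hFint s₀ hs₀mem).restrict)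
    ((hF'c s₀).aestronglyMeasurable.restrict)
    (Eventually.of_forall fun t s hs => by
      rw [Real.norm_eq_abs]
      exact hF'bound s (Metric.ball_subset_closedBall hs) t)
    hκint.restrict
    (Eventually.of_forall fun t s _ => by
      exact (((hθd _).hasFDerivAt.comp_hasDerivAt s
        (hasDerivAt_insertNth_update j k y t s)).mul_const (ρ t)))
  have hAder : HasDerivAt (fun s => ∫ t in Iio c, F s t) (∫ t in Iio c, F' s₀ t) s₀ := hA.2
  -- Part B : moving endpoint, FTC term
  have hF₁ : HasDerivAt (fun a => ∫ t in c..a, F s₀ t) (F s₀ c) c :=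
    intervalIntegral.integral_hasDerivAt_right ((hFc s₀).intervalIntegrable c c)
      ((hFc s₀).stronglyMeasurable.stronglyMeasurableAtFilter) (hFc s₀).continuousAt
  have hcomp : HasDerivAt (fun s => ∫ t in c..(b s), F s₀ t) (F s₀ c * c₀) s₀ := by
    have h1 : HasDerivAt (fun a => ∫ t in c..a, F s₀ t) (F s₀ c) (b s₀) := hbs₀ ▸ hF₁
    exact h1.comp s₀ hb
  -- Part C : the little-o correction term
  set D : ℝ → ℝ := fun s => ∫ t in c..(b s), (F s t - F s₀ t) with hDdef
  have hDder : HasDerivAt D 0 s₀ := by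
    rw [hasDerivAt_iff_isLittleO]
    have hDs₀ : D s₀ = 0 := by simp [hDdef]
    simp only [hDs₀, smul_zero, sub_zero]
    rw [Asymptotics.isLittleO_iff]
    intro εp hεp
    obtain ⟨C, hCpos, hCb⟩ := (hb.isBigO_sub).exists_pos
    rw [Asymptotics.isBigOWith_iff] at hCb
    set G : ℝ × ℝ → ℝ := fun p => θ (j.insertNth p.1 (Function.update y k p.2)) * ρ p.1
      with hGdef
    have hGc : Continuous G :=
      (hθ.continuous.comp
        (continuous_fst.finInsertNth j (continuous_const.update k continuous_snd))).mul
        (hρc.comp continuous_fst)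
    set K : Set (ℝ × ℝ) := Icc (c-1) (c+1) ×ˢ Icc (s₀-1) (s₀+1) with hKdef
    have hGu : UniformContinuousOn G K :=
      ((isCompact_Icc).prod isCompact_Icc).uniformContinuousOn_of_continuous hGc.continuousOn
    rw [Metric.uniformContinuousOn_iff] at hGu
    obtain ⟨δ, hδpos, hδ⟩ := hGu (εp/C) (by positivity)
    have ev1 : ∀ᶠ s in 𝓝 s₀, ‖b s - c‖ ≤ C * ‖s - s₀‖ := by
      filter_upwards [hCb] with s hs
      rwa [hbs₀] at hs
    have ev2 : ∀ᶠ s in 𝓝 s₀, |b s - c| ≤ 1 := by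
      have : Tendsto b (𝓝 s₀) (𝓝 c) := hbs₀ ▸ hb.continuousAt.tendsto
      have h1 : ∀ᶠ u in 𝓝 c, |u - c| ≤ 1 := by
        have := Metric.closedBall_mem_nhds c one_pos
        exact Filter.mem_of_superset this (fun u hu => by simpa [Real.dist_eq] using hu)
      exact this.eventually h1
    have ev3 : ∀ᶠ s in 𝓝 s₀, |s - s₀| < min δ 1 := by
      have h := Metric.ball_mem_nhds s₀ (lt_min hδpos one_pos)
      refine Filter.eventually_iff_exists_mem.2 ⟨_, h, fun s hs => ?_⟩
      simpa [Metric.ball, Real.dist_eq] using hs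
    filter_upwards [ev1, ev2, ev3] with s h1 h2 h3
    have hbub : ∀ t ∈ Set.uIoc c (b s), ‖F s t - F s₀ t‖ ≤ εp / C := by
      intro t ht
      rw [Set.mem_uIoc] at ht
      have habs := abs_le.1 h2
      have htI : t ∈ Icc (c-1) (c+1) := by
        rcases ht with ⟨ht1, ht2⟩ | ⟨ht1, ht2⟩ <;> constructor <;> linarith
      have hsI : s ∈ Icc (s₀-1) (s₀+1) := by
        have := (abs_lt.1 h3)
        have h3' := lt_min_iff.1 h3
        constructor <;> [linarith [abs_lt.1 h3'.2] ; linarith [abs_lt.1 h3'.2]]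
      have hs₀I : s₀ ∈ Icc (s₀-1) (s₀+1) := by constructor <;> linarith
      have hts : (t, s) ∈ K := ⟨htI, hsI⟩
      have hts₀ : (t, s₀) ∈ K := ⟨htI, hs₀I⟩
      have hdist : dist (t, s) (t, s₀) < δ := by
        rw [Prod.dist_eq]
        simp only [dist_self]
        have h3' := lt_min_iff.1 h3
        rw [Real.dist_eq]
        exact max_lt (lt_of_le_of_lt (by positivity) hδpos) h3'.1
      have := hδ (t, s) hts (t, s₀) hts₀ hdist
      rw [Real.dist_eq] at this
      have hFG : F s t - F s₀ t = G (t, s) - G (t, s₀) := rfl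
      rw [Real.norm_eq_abs, hFG]
      exact le_of_lt this
    have hle := intervalIntegral.norm_integral_le_of_norm_le_const hbub
    have hDs : ‖D s‖ ≤ εp / C * |b s - c| := hle
    calc ‖D s‖ ≤ εp / C * |b s - c| := hDs
      _ ≤ εp / C * (C * ‖s - s₀‖) := by
          apply mul_le_mul_of_nonneg_left _ (by positivity)
          rw [← Real.norm_eq_abs]
          exact h1
      _ = εp * ‖s - s₀‖ := by field_simp
  -- assemble H
  have hHeq : ∀ s, (∫ t in c..(b s), F s t) = (∫ t in c..(b s), F s₀ t) + D s := by
    intro s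
    rw [hDdef]
    beta_reduce
    rw [← intervalIntegral.integral_add (g := fun t => F s t - F s₀ t)
      ((hFc s₀).intervalIntegrable _ _) (((hFc s).sub (hFc s₀)).intervalIntegrable _ _)]
    congr 1
    funext t
    ring
  have hH : HasDerivAt (fun s => ∫ t in c..(b s), F s t) (F s₀ c * c₀ + 0) s₀ :=
    (hcomp.add hDder).congr_of_eventuallyEq (Eventually.of_forall fun s => hHeq s)
  -- eventual splitting of the integral
  have hsplit : (fun s : ℝ => -∫ t in Iio (b s), F s t)
      =ᶠ[𝓝 s₀] fun s => -((∫ t in Iio c, F s t) + ∫ t in c..(b s), F s t) := by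
    filter_upwards [Metric.ball_mem_nhds s₀ hε₀pos] with s hs
    have hint : Integrable (F s) := hFint s (Metric.ball_subset_closedBall hs)
    have h1 : ∀ a : ℝ, (∫ t in Iio a, F s t) = ∫ t in Iic a, F s t := fun a => by
      rw [Measure.restrict_congr_set Iio_ae_eq_Iic]
    have h2 := intervalIntegral.integral_Iic_sub_Iic hint.integrableOn hint.integrableOn
      (a := c) (b := b s)
    rw [h1, h1]
    rw [← h2]
    ring
  -- conclusion
  have hmain : HasDerivAt
      (fun s : ℝ => -∫ t in Iio (b s), F s t)
      (-((∫ t in Iio c, F' s₀ t) + (F s₀ c * c₀ + 0))) s₀ :=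
    ((hAder.add hH).neg).congr_of_eventuallyEq hsplit
  have hval : -((∫ t in Iio c, F' s₀ t) + (F s₀ c * c₀ + 0))
      = -(∫ t in Iio (ψ y), pderiv (j.succAbove k) θ (j.insertNth t y) * ρ t)
        + θ (j.insertNth (ψ y) y)
          * (pderiv (j.succAbove k) φ (j.insertNth (ψ y) y)
              / pderiv j φ (j.insertNth (ψ y) y))
          * ρ (ψ y) := by
    have hF'eq : ∀ t, F' s₀ t = pderiv (j.succAbove k) θ (j.insertNth t y) * ρ t := fun t => by
      rw [hF'def]; simp only [hupd0]
    have hFeq : F s₀ c = θ (j.insertNth (ψ y) y) * ρ (ψ y) := by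
      rw [hFdef]; simp only [hupd0, hcdef]
    rw [hFeq]
    simp only [hF'eq, hFeq, hc₀, hcdef, hx₀def]
    ring
  rw [hval] at hmain
  exact hmain
end
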